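/- arXiv:2302.05030 — 4 statements merged into one kernel-verified Lean document; each statement's English description precedes it below -/
import Mathlib

section
/- Let G = (V,E) be a finite simple graph on n vertices, let V' ⊆ V be partitioned as V' = A' ⊎ D', let δ_in ∈ (0,1] and δ_out = δ_in^5/10^8. Suppose μ(G[A']) ≥ δ_in·n/2. Then for every matching M in G[V']: if |M[A']| < 3·δ_out·n and μ(G[A' \ V(M)]) < 16·δ_out·n, then |M[A',D']| ≥ δ_in·n/3. -/
attribute [local instance] Classical.propDecidable

/-- A matching in a simple graph `G`, represented as a finite set of edges of `G`
no two of which share an endpoint. -/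
def IsMatching {V : Type*} (G : SimpleGraph V) (M : Finset (Sym2 V)) : Prop :=
  (∀ e ∈ M, e ∈ G.edgeSet) ∧
  ∀ e ∈ M, ∀ f ∈ M, e ≠ f → ∀ v : V, v ∈ e → v ∉ f

/-- The set `V(M)` of vertices matched by `M`. -/
def matchedVerts {V : Type*} (M : Finset (Sym2 V)) : Set V := {v | ∃ e ∈ M, v ∈ e}

/-- `nuOn G S` is `μ(G[S])`: the maximum size of a matching of `G` all of whose
edges have both endpoints in `S`. -/
noncomputable def nuOn {V : Type*} (G : SimpleGraph V) (S : Set V) : ℕ :=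
  sSup {k | ∃ M : Finset (Sym2 V), IsMatching G M ∧ (∀ e ∈ M, ∀ v ∈ e, v ∈ S) ∧ M.card = k}

/-! Take a maximum matching `N` of `G[A']`. Its edges avoiding `V(M)` form a matching of
`G[A' \ V(M)]`, and each of its other edges contains its own vertex of `A' ∩ V(M)`; every such
vertex lies on an edge of `M[A']` or of `M[A',D']`, and the latter contribute one vertex each.
Hence `μ(G[A']) ≤ μ(G[A' \ V(M)]) + 2|M[A']| + |M[A',D']|`, and the hypotheses give
`|M[A',D']| > (δ_in/2 - 22 δ_out) n ≥ δ_in n / 3` since `δ_in⁵ ≤ δ_in`. -/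

open Finset

section

variable {V : Type*}

lemma IsMatching.mono {G : SimpleGraph V} {M N : Finset (Sym2 V)} (hM : IsMatching G M)
    (hNM : N ⊆ M) : IsMatching G N :=
  ⟨fun e he => hM.1 e (hNM he), fun e he f hf => hM.2 e (hNM he) f (hNM hf)⟩

section nuOn

variable [Fintype V] (G : SimpleGraph V) (S : Set V)

lemma nuOn_bddAbove :
    BddAbove {k | ∃ M : Finset (Sym2 V), IsMatching G M ∧ (∀ e ∈ M, ∀ v ∈ e, v ∈ S) ∧ #M = k} := by
  refine ⟨Fintype.card (Sym2 V), ?_⟩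
  rintro k ⟨M, -, -, rfl⟩
  exact card_le_univ M

lemma exists_isMatching_card_eq_nuOn :
    ∃ M : Finset (Sym2 V), IsMatching G M ∧ (∀ e ∈ M, ∀ v ∈ e, v ∈ S) ∧ #M = nuOn G S := by
  refine Nat.sSup_mem ?_ (nuOn_bddAbove G S)
  exact ⟨0, ∅, by simp [IsMatching], by simp, rfl⟩

variable {G S} in
lemma card_le_nuOn {M : Finset (Sym2 V)} (hM : IsMatching G M) (hMS : ∀ e ∈ M, ∀ v ∈ e, v ∈ S) :
    #M ≤ nuOn G S :=
  le_csSup (nuOn_bddAbove G S) ⟨M, hM, hMS, rfl⟩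

end nuOn

lemma Sym2.card_filter_mem_le_two (T : Finset V) (e : Sym2 V) : #{v ∈ T | v ∈ e} ≤ 2 := by
  induction e using Sym2.ind with
  | h a b =>
    calc #{v ∈ T | v ∈ s(a, b)} ≤ #{a, b} :=
          card_le_card fun v hv => by simpa using (mem_filter.1 hv).2
      _ ≤ 2 := card_le_two

lemma IsMatching.card_le_card_of_forall_exists_mem {G : SimpleGraph V} {N : Finset (Sym2 V)}
    (hN : IsMatching G N) {T : Finset V} (hT : ∀ e ∈ N, ∃ v ∈ e, v ∈ T) : #N ≤ #T :=
  card_le_card_of_forall_subsingleton (fun e v => v ∈ e)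
    (fun e he => by obtain ⟨v, hve, hvT⟩ := hT e he; exact ⟨v, hvT, hve⟩)
    (fun v _ e he f hf => by_contra fun hne => hN.2 e he.1 f hf.1 hne v he.2 hf.2)

lemma Sym2.forall_mem_or_eq_mk_of_mem {A D : Set V} {e : Sym2 V} (he : ∀ v ∈ e, v ∈ A ∪ D)
    {a : V} (ha : a ∈ e) (haA : a ∈ A) :
    (∀ v ∈ e, v ∈ A) ∨ ∃ a ∈ A, ∃ d ∈ D, e = s(a, d) := by
  obtain ⟨b, rfl⟩ := Sym2.mem_iff_exists.1 ha
  rcases he b (Sym2.mem_mk_right a b) with hbA | hbD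
  · exact Or.inl fun v hv => by rcases Sym2.mem_iff.1 hv with rfl | rfl <;> assumption
  · exact Or.inr ⟨a, haA, b, hbD, rfl⟩

lemma card_le_two_mul_card_inside_add_card_across {A D : Set V} (hAD : Disjoint A D)
    {M : Finset (Sym2 V)} (hM : ∀ e ∈ M, ∀ v ∈ e, v ∈ A ∪ D)
    {T : Finset V} (hT : ∀ v ∈ T, v ∈ A ∧ v ∈ matchedVerts M) :
    #T ≤ 2 * #{e ∈ M | ∀ v ∈ e, v ∈ A} + #{e ∈ M | ∃ a ∈ A, ∃ d ∈ D, e = s(a, d)} := by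
  set MA := M.filter fun e => ∀ v ∈ e, v ∈ A
  set MAD := M.filter fun e => ∃ a ∈ A, ∃ d ∈ D, e = s(a, d)
  set ends : Sym2 V → Finset V := fun e => {v ∈ T | v ∈ e}
  have hcover : T ⊆ MA.biUnion ends ∪ MAD.biUnion ends := by
    intro v hv
    obtain ⟨hvA, e, heM, hve⟩ := hT v hv
    have hvends : v ∈ ends e := mem_filter.2 ⟨hv, hve⟩
    rcases Sym2.forall_mem_or_eq_mk_of_mem (hM e heM) hve hvA with he | he
    · exact mem_union_left _ (mem_biUnion.2 ⟨e, mem_filter.2 ⟨heM, he⟩, hvends⟩)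
    · exact mem_union_right _ (mem_biUnion.2 ⟨e, mem_filter.2 ⟨heM, he⟩, hvends⟩)
  have hacross : ∀ e ∈ MAD, #(ends e) ≤ 1 := by
    intro e he
    obtain ⟨-, a, -, d, hdD, rfl⟩ := mem_filter.1 he
    refine card_le_one.2 fun v hv w hw => ?_
    have hA : ∀ u ∈ ends s(a, d), u = a := fun u hu => by
      obtain ⟨huT, hu⟩ := mem_filter.1 hu
      rcases Sym2.mem_iff.1 hu with rfl | rfl
      · rfl
      · exact absurd hdD (Set.disjoint_left.1 hAD (hT u huT).1)
    rw [hA v hv, hA w hw]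
  calc #T ≤ #(MA.biUnion ends) + #(MAD.biUnion ends) :=
        (card_le_card hcover).trans (card_union_le _ _)
    _ ≤ ∑ e ∈ MA, #(ends e) + ∑ e ∈ MAD, #(ends e) := add_le_add card_biUnion_le card_biUnion_le
    _ ≤ #MA * 2 + #MAD * 1 :=
      add_le_add (sum_le_card_nsmul _ _ _ fun e _ => Sym2.card_filter_mem_le_two T e)
        (sum_le_card_nsmul _ _ _ hacross)
    _ = 2 * #MA + #MAD := by ring

lemma nuOn_le_nuOn_sdiff_matchedVerts_add [Fintype V] (G : SimpleGraph V) {A D : Set V}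
    (hAD : Disjoint A D) {M : Finset (Sym2 V)} (hM : ∀ e ∈ M, ∀ v ∈ e, v ∈ A ∪ D) :
    nuOn G A ≤ nuOn G (A \ matchedVerts M)
      + 2 * #{e ∈ M | ∀ v ∈ e, v ∈ A} + #{e ∈ M | ∃ a ∈ A, ∃ d ∈ D, e = s(a, d)} := by
  obtain ⟨N, hN, hNA, hNcard⟩ := exists_isMatching_card_eq_nuOn G A
  set T : Finset V := {v | v ∈ A ∧ v ∈ matchedVerts M}
  have hfree : #{e ∈ N | ∀ v ∈ e, v ∉ matchedVerts M} ≤ nuOn G (A \ matchedVerts M) :=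
    card_le_nuOn (hN.mono (filter_subset _ _)) fun e he v hv =>
      ⟨hNA e (mem_filter.1 he).1 v hv, (mem_filter.1 he).2 v hv⟩
  have hhit : #{e ∈ N | ¬ ∀ v ∈ e, v ∉ matchedVerts M} ≤ #T := by
    refine (hN.mono (filter_subset _ _)).card_le_card_of_forall_exists_mem fun e he => ?_
    obtain ⟨heN, hmeet⟩ := mem_filter.1 he
    push Not at hmeet
    obtain ⟨v, hve, hvM⟩ := hmeet
    exact ⟨v, hve, by simp [T, hNA e heN v hve, hvM]⟩
  -- `convert` only reconciles the decidability instances of the filters, which change once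
  -- `[Fintype V]` is in scope.
  have hT : #T ≤ 2 * #{e ∈ M | ∀ v ∈ e, v ∈ A} + #{e ∈ M | ∃ a ∈ A, ∃ d ∈ D, e = s(a, d)} := by
    convert card_le_two_mul_card_inside_add_card_across hAD hM (T := T) (by simp [T])
  rw [← hNcard, ← card_filter_add_card_filter_not fun e => ∀ v ∈ e, v ∉ matchedVerts M]
  omega

end

theorem stmt_0_general {V : Type*} [Fintype V] (G : SimpleGraph V) (n : ℕ)
    (V' A' D' : Set V) (hpart : A' ∪ D' = V') (hdisj : Disjoint A' D')
    (δin : ℝ) (hδ0 : 0 < δin) (hδ1 : δin ≤ 1)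
    (δout : ℝ) (hδout : δout = δin ^ 5 / 10 ^ 8)
    (hμ : (nuOn G A' : ℝ) ≥ δin * n / 2)
    (M : Finset (Sym2 V))
    (hMV' : ∀ e ∈ M, ∀ v ∈ e, v ∈ V')
    (h1 : ((M.filter fun e => ∀ v ∈ e, v ∈ A').card : ℝ) < 3 * δout * n)
    (h2 : (nuOn G (A' \ matchedVerts M) : ℝ) < 16 * δout * n) :
    ((M.filter fun e => ∃ a ∈ A', ∃ d ∈ D', e = s(a, d)).card : ℝ) ≥ δin * n / 3 := by
  subst hpart
  have hcount : (nuOn G A' : ℝ) ≤ nuOn G (A' \ matchedVerts M)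
      + 2 * #{e ∈ M | ∀ v ∈ e, v ∈ A'} + #{e ∈ M | ∃ a ∈ A', ∃ d ∈ D', e = s(a, d)} := by
    exact_mod_cast nuOn_le_nuOn_sdiff_matchedVerts_add G hdisj hMV'
  have hδout_le : 22 * δout * n ≤ δin * n / 6 := by
    have hpow : δin ^ 5 ≤ δin := pow_le_of_le_one hδ0.le hδ1 (by norm_num)
    rw [hδout]
    have := mul_le_mul_of_nonneg_right hpow (Nat.cast_nonneg (α := ℝ) n)
    nlinarith
  linarith

theorem stmt_0 {V : Type*} [Fintype V] (G : SimpleGraph V) (n : ℕ)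
    (hn : Fintype.card V = n)
    (V' A' D' : Set V) (hpart : A' ∪ D' = V') (hdisj : Disjoint A' D')
    (δin : ℝ) (hδ0 : 0 < δin) (hδ1 : δin ≤ 1)
    (δout : ℝ) (hδout : δout = δin ^ 5 / 10 ^ 8)
    (hμ : (nuOn G A' : ℝ) ≥ δin * n / 2)
    (M : Finset (Sym2 V)) (hM : IsMatching G M)
    (hMV' : ∀ e ∈ M, ∀ v ∈ e, v ∈ V')
    (h1 : ((M.filter fun e => ∀ v ∈ e, v ∈ A').card : ℝ) < 3 * δout * n)
    (h2 : (nuOn G (A' \ matchedVerts M) : ℝ) < 16 * δout * n) :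
    ((M.filter fun e => ∃ a ∈ A', ∃ d ∈ D', e = s(a, d)).card : ℝ) ≥ δin * n / 3 :=
  stmt_0_general G n V' A' D' hpart hdisj δin hδ0 hδ1 δout hδout hμ M hMV' h1 h2
end

section
/- Let n ≥ 1, δ ∈ (0,1], and let r ≥ 1 be an integer. Let U be a nonempty finite set with |U| ≤ n, and let M̂ be a matching whose matched vertex set V(M̂) satisfies V(M̂) ⊆ U (so |V(M̂)| = 2|M̂|). Sample Y_1, …, Y_r independently and uniformly at random from U, let Y := |{i ∈ [r] : Y_i ∈ V(M̂)}|, and set μ̃ := |U|·Y/(2r) − δ·n/2. Then Pr[μ̃ > |M̂| or μ̃ < |M̂| − δ·n] ≤ 2·exp(−2·δ²·r). -/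
attribute [local instance] Classical.propDecidable

/-!
`Y` is a sum of `r` independent indicators, each with mean `|V(M̂)| / |U| = 2|M̂| / |U|`, so by
Hoeffding's inequality `|Y - 2r|M̂|/|U|| ≥ rδ` has probability at most `2 exp (-2δ²r)`. Off that
event `|U|Y/(2r)` is within `δ|U|/2 ≤ δn/2` of `|M̂|`, that is, `|M̂| - δn ≤ μ̃ ≤ |M̂|`.
-/

open MeasureTheory ProbabilityTheory Finset Real

section UniformSampling

variable {S : Type*} [Fintype S]

lemma integral_uniformOn_univ [MeasurableSpace S] [DiscreteMeasurableSpace S] (f : S → ℝ) :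
    ∫ x, f x ∂uniformOn (Set.univ : Set S) = (∑ x, f x) / Fintype.card S := by
  rw [integral_fintype .of_finite, sum_div]
  refine sum_congr rfl fun x _ => ?_
  simp [measureReal_def, uniformOn_univ, div_eq_inv_mul]

lemma measureReal_uniformOn_univ_setOf [MeasurableSpace S] [MeasurableSingletonClass S]
    (P : S → Prop) [DecidablePred P] :
    (uniformOn (Set.univ : Set S)).real {x | P x} = #{x | P x} / Fintype.card S := by
  have hset : {x | P x} = ((univ.filter P : Finset S) : Set S) := by simp
  rw [hset, measureReal_def, uniformOn_univ, Measure.count_apply_finset]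
  simp

variable [Nonempty S] {f : S → ℝ}

lemma hasSubgaussianMGF_comp_eval_sub_mean [MeasurableSpace S] [DiscreteMeasurableSpace S]
    {r : ℕ} (hf : ∀ x, f x ∈ Set.Icc 0 1) (i : Fin r) :
    HasSubgaussianMGF (fun ω : Fin r → S => f (ω i) - (∑ x, f x) / Fintype.card S) (1 / 4)
      (uniformOn Set.univ) := by
  have h := hasSubgaussianMGF_of_mem_Icc (μ := uniformOn (Set.univ : Set (Fin r → S)))
    (X := fun ω => f (ω i)) (measurable_of_finite _).aemeasurable (ae_of_all _ fun ω => hf (ω i))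
  rw [← Set.pi_univ, uniformOn_pi,
    integral_comp_eval (measurable_of_finite f).aestronglyMeasurable, integral_uniformOn_univ] at h
  rw [← Set.pi_univ, uniformOn_pi]
  convert h using 1
  norm_num

lemma measureReal_uniformOn_abs_sum_sub_ge_le [MeasurableSpace S] [DiscreteMeasurableSpace S]
    {r : ℕ} (hf : ∀ x, f x ∈ Set.Icc 0 1) {ε : ℝ} (hε : 0 ≤ ε) :
    (uniformOn (Set.univ : Set (Fin r → S))).real
        {ω | ε ≤ |∑ i, f (ω i) - r * ((∑ x, f x) / Fintype.card S)|} ≤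
      2 * exp (-2 * ε ^ 2 / r) := by
  set μ := uniformOn (Set.univ : Set (Fin r → S))
  set p := (∑ x, f x) / Fintype.card S
  have hindep (g : S → ℝ) : iIndepFun (fun (i : Fin r) ω => g (ω i)) μ := by
    rw [show μ = Measure.pi fun _ => uniformOn Set.univ by rw [← uniformOn_pi, Set.pi_univ]]
    exact iIndepFun_pi fun _ => (measurable_of_finite _).aemeasurable
  have hupper := HasSubgaussianMGF.measure_sum_ge_le_of_iIndepFun (hindep (f · - p))
    (s := univ) (fun i _ => hasSubgaussianMGF_comp_eval_sub_mean hf i) hε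
  have hlower := HasSubgaussianMGF.measure_sum_ge_le_of_iIndepFun (hindep (-(f · - p)))
    (s := univ) (fun i _ => (hasSubgaussianMGF_comp_eval_sub_mean hf i).neg) hε
  have hexp : -ε ^ 2 / (2 * ((r * (1 / 4) : NNReal) : ℝ)) = -2 * ε ^ 2 / r := by
    push_cast; ring
  simp only [sum_const, card_univ, Fintype.card_fin, nsmul_eq_mul, hexp, Pi.neg_apply]
    at hupper hlower
  calc μ.real {ω | ε ≤ |∑ i, f (ω i) - r * p|}
      ≤ μ.real ({ω | ε ≤ ∑ i, (f (ω i) - p)} ∪ {ω | ε ≤ ∑ i, -(f (ω i) - p)}) := by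
        refine measureReal_mono fun ω hω => ?_
        simp only [Set.mem_ofPred_eq, Set.mem_union, sum_neg_distrib, sum_sub_distrib, sum_const,
          card_univ, Fintype.card_fin, nsmul_eq_mul] at hω ⊢
        exact (le_abs'.mp hω).symm.imp (fun h => by linarith) (fun h => by linarith)
    _ ≤ _ := (measureReal_union_le _ _).trans (by linarith)

theorem card_abs_sum_sub_ge_div_card_le (r : ℕ) (hf : ∀ x, f x ∈ Set.Icc 0 1) {δ : ℝ}
    (hδ : 0 ≤ δ) :
    (#{ω : Fin r → S | r * δ ≤ |∑ i, f (ω i) - r * ((∑ x, f x) / Fintype.card S)|} : ℝ) /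
        Fintype.card (Fin r → S) ≤
      2 * exp (-(2 * δ ^ 2 * r)) := by
  let _ : MeasurableSpace S := ⊤
  have : DiscreteMeasurableSpace S := ⟨fun _ => trivial⟩
  rw [← measureReal_uniformOn_univ_setOf]
  have hexp : -2 * (r * δ) ^ 2 / r = -(2 * δ ^ 2 * r) := by
    rcases eq_or_ne (r : ℝ) 0 with hr | hr
    · simp [hr]
    · field_simp
  exact hexp ▸ measureReal_uniformOn_abs_sum_sub_ge_le hf (by positivity)

end UniformSampling

lemma card_filter_exists_mem_of_pairwise_disjoint {α : Type*} [DecidableEq α] {U : Finset α}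
    {M : Finset (Sym2 α)} (hdisj : ∀ e ∈ M, ∀ f ∈ M, e ≠ f → ∀ v : α, v ∈ e → v ∉ f)
    (hnd : ∀ e ∈ M, ¬ e.IsDiag) (hsub : ∀ e ∈ M, ∀ v ∈ e, v ∈ U) :
    #{x ∈ U | ∃ e ∈ M, x ∈ e} = 2 * #M := by
  have hcover : {x ∈ U | ∃ e ∈ M, x ∈ e} = M.biUnion Sym2.toFinset := by
    ext v
    simp only [mem_filter, mem_biUnion, Sym2.mem_toFinset]
    exact ⟨fun h => h.2, fun ⟨e, he, hv⟩ => ⟨hsub e he v hv, e, he, hv⟩⟩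
  rw [hcover, card_biUnion fun e he f hf hef => disjoint_left.2 fun v hve hvf => by
    simp only [Sym2.mem_toFinset] at hve hvf; exact hdisj e he f hf hef v hve hvf]
  rw [sum_congr rfl fun e he => Sym2.card_toFinset_of_not_isDiag e (hnd e he), sum_const,
    smul_eq_mul, mul_comm]

lemma mul_le_abs_sub_of_lt_or_gt {u n r Y M δ : ℝ} (hu : 0 < u) (hun : u ≤ n) (hr : 0 < r)
    (hδ : 0 ≤ δ) (h : u * Y / (2 * r) - δ * n / 2 > M ∨ u * Y / (2 * r) - δ * n / 2 < M - δ * n) :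
    r * δ ≤ |Y - r * (2 * M / u)| := by
  have hY : u * Y = 2 * r * (u * Y / (2 * r)) := by field_simp
  have hδn : 0 ≤ r * δ * (n - u) := by have := sub_nonneg.2 hun; positivity
  have key : u * (r * δ) ≤ |u * Y - 2 * r * M| := by
    rcases h with h | h
    · exact le_abs.2 (Or.inl (by nlinarith [mul_pos hr (sub_pos.2 h)]))
    · exact le_abs.2 (Or.inr (by nlinarith [mul_pos hr (sub_pos.2 h)]))
  have hfactor : u * Y - 2 * r * M = u * (Y - r * (2 * M / u)) := by field_simp
  rw [hfactor, abs_mul, abs_of_pos hu] at key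
  exact le_of_mul_le_mul_left key hu

theorem stmt_3_general {α : Type*} (n r : ℕ) (hr : 1 ≤ r)
    (δ : ℝ) (hδ0 : 0 < δ)
    (U : Finset α) (hUne : U.Nonempty) (hUn : U.card ≤ n)
    (Mh : Finset (Sym2 α))
    (hdisj : ∀ e ∈ Mh, ∀ f ∈ Mh, e ≠ f → ∀ v : α, v ∈ e → v ∉ f)
    (hnd : ∀ e ∈ Mh, ¬ e.IsDiag)
    (hsub : ∀ e ∈ Mh, ∀ v ∈ e, v ∈ U) :
    (((Finset.univ.filter fun ω : Fin r → {x // x ∈ U} =>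
        let Y : ℕ := (Finset.univ.filter fun i : Fin r => ∃ e ∈ Mh, (ω i).1 ∈ e).card
        let μt : ℝ := (U.card : ℝ) * Y / (2 * r) - δ * n / 2
        μt > (Mh.card : ℝ) ∨ μt < (Mh.card : ℝ) - δ * n).card : ℝ) /
      (Fintype.card (Fin r → {x // x ∈ U}) : ℝ)) ≤
      2 * Real.exp (-(2 * δ ^ 2 * r)) := by
  have : Nonempty {x // x ∈ U} := hUne.to_subtype
  set f : {x // x ∈ U} → ℝ := fun x => if ∃ e ∈ Mh, x.1 ∈ e then 1 else 0
  have hmatched : ∑ x, f x = 2 * #Mh := by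
    rw [sum_coe_sort U (fun x => if ∃ e ∈ Mh, x ∈ e then (1 : ℝ) else 0), sum_boole,
      card_filter_exists_mem_of_pairwise_disjoint hdisj hnd hsub]
    push_cast; ring
  refine le_trans ?_ (card_abs_sum_sub_ge_div_card_le r
    (f := f) (fun x => by unfold f; split <;> simp) hδ0.le)
  gcongr with ω
  intro hω
  simp only [hmatched, Fintype.card_coe, f, sum_boole] at hω ⊢
  exact mul_le_abs_sub_of_lt_or_gt (by exact_mod_cast hUne.card_pos) (by exact_mod_cast hUn)
    (by exact_mod_cast hr) hδ0.le hω

/-- Sampling `r` vertices independently and uniformly from the nonempty finite set `U`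
(the sample space is `Fin r → {x // x ∈ U}` with the uniform distribution, so
probabilities are ratios of outcome counts), where `M̂` is a matching (a set of pairwise
disjoint unordered pairs of distinct vertices) whose matched vertex set is contained in `U`,
let `Y` be the number of samples that are matched by `M̂` and
`μ̃ := |U|·Y/(2r) − δ·n/2`.  If `|U| ≤ n`, then
`Pr[μ̃ > |M̂| or μ̃ < |M̂| − δ·n] ≤ 2·exp(−2·δ²·r)`. -/
theorem stmt_3 {α : Type*} (n r : ℕ) (hn : 1 ≤ n) (hr : 1 ≤ r)
    (δ : ℝ) (hδ0 : 0 < δ) (hδ1 : δ ≤ 1)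
    (U : Finset α) (hUne : U.Nonempty) (hUn : U.card ≤ n)
    (Mh : Finset (Sym2 α))
    (hdisj : ∀ e ∈ Mh, ∀ f ∈ Mh, e ≠ f → ∀ v : α, v ∈ e → v ∉ f)
    (hnd : ∀ e ∈ Mh, ¬ e.IsDiag)
    (hsub : ∀ e ∈ Mh, ∀ v ∈ e, v ∈ U) :
    (((Finset.univ.filter fun ω : Fin r → {x // x ∈ U} =>
        let Y : ℕ := (Finset.univ.filter fun i : Fin r => ∃ e ∈ Mh, (ω i).1 ∈ e).card
        let μt : ℝ := (U.card : ℝ) * Y / (2 * r) - δ * n / 2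
        μt > (Mh.card : ℝ) ∨ μt < (Mh.card : ℝ) - δ * n).card : ℝ) /
      (Fintype.card (Fin r → {x // x ∈ U}) : ℝ)) ≤
      2 * Real.exp (-(2 * δ ^ 2 * r)) :=
  stmt_3_general n r hr δ hδ0 U hUne hUn Mh hdisj hnd hsub
end

section
/- Let 0 < ε ≤ 1/2 and let n ≥ 2 be an integer. Let V' be a finite set of at most n vertices with |V'| ≥ 2, and let G be a simple graph on V'. Sample a sequence of p := ⌈100·n^{2−2ε}·log n⌉ unordered pairs of distinct vertices of V', each chosen independently and uniformly at random, and let M be the greedy matching obtained by scanning this sequence in order. Then with probability at least 1 − n^{−9}, every vertex of V' \ V(M) has at most n^{2ε} neighbors in the induced subgraph G[V' \ V(M)]. -/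
/-! Let `K = ⌊n^{2ε}⌋` and let `N ≤ n²` be the number of pairs. If `v` ends up unmatched with more
than `K` unmatched neighbours, then at every step `v` and those neighbours are still unmatched, so
none of the `K + 1` or more pairs `s(v, u)` joining `v` to a currently unmatched neighbour can be
drawn: it would match `v`. Counting sequences letter by letter, this event has probability at most
`(1 - (K + 1) / N)^p ≤ exp(-p (K + 1) / N) ≤ n^{-100}`, and a union bound over the at most `n`
choices of `v` leaves `n^{-9}`. -/

attribute [local instance] Classical.propDecidable

/-- Greedy matching: scan the list of candidate pairs in order, adding a pair to the
current matching `M` whenever it is an edge of `G` and both its endpoints are unmatched. -/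
noncomputable def greedyAux {W : Type*} (G : SimpleGraph W) :
    List (Sym2 W) → Finset (Sym2 W) → Finset (Sym2 W)
  | [], M => M
  | e :: rest, M =>
      greedyAux G rest
        (if e ∈ G.edgeSet ∧ ∀ v ∈ e, ∀ f ∈ M, v ∉ f then insert e M else M)

/-- The greedy matching obtained by scanning the sequence of pairs `l` in order. -/
noncomputable def greedyMatching {W : Type*} (G : SimpleGraph W) (l : List (Sym2 W)) :
    Finset (Sym2 W) :=
  greedyAux G l ∅

open Finset Real

theorem card_filter_fin_succ {E : Type*} [Fintype E] {q : ℕ} (P : (Fin (q + 1) → E) → Prop) :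
    #{ω | P ω} = ∑ e, #{ω' : Fin q → E | P (Fin.cons e ω')} := by
  simp only [card_filter]
  rw [← Fintype.sum_equiv (Fin.consEquiv fun _ => E) _ _ (fun _ => rfl), Fintype.sum_prod_type]
  rfl

theorem card_filter_ofFn_le_pow {E : Type*} [Fintype E] (k q : ℕ) (B : List E → Prop)
    (hforbid : ∀ w e l, B (w ++ e :: l) → k ≤ #{e' | ∀ l', ¬ B (w ++ e' :: l')}) :
    #{ω : Fin q → E | B (List.ofFn ω)} ≤ (Fintype.card E - k) ^ q := by
  induction q generalizing B with
  | zero => exact (card_le_univ _).trans (by simp)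
  | succ q ih =>
    by_cases hB : ∃ e l, B (e :: l)
    swap
    · push Not at hB
      simp [List.ofFn_succ, hB]
    obtain ⟨e₀, l₀, hB₀⟩ := hB
    set F : Finset E := {e' | ∀ l', ¬ B (e' :: l')}
    have hF : k ≤ #F := hforbid [] e₀ l₀ hB₀
    have hfiber : ∀ e, #{ω' : Fin q → E | B (e :: List.ofFn ω')} ≤
        if e ∈ F then 0 else (Fintype.card E - k) ^ q := by
      intro e
      split_ifs with he
      · simp_all [F]
      · exact ih (fun l => B (e :: l)) fun w e' l h => hforbid (e :: w) e' l h
    calc #{ω : Fin (q + 1) → E | B (List.ofFn ω)}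
        = ∑ e, #{ω' : Fin q → E | B (e :: List.ofFn ω')} := by
          simp only [card_filter_fin_succ, List.ofFn_cons]
      _ ≤ ∑ e, if e ∈ F then 0 else (Fintype.card E - k) ^ q := sum_le_sum fun e _ => hfiber e
      _ = #Fᶜ * (Fintype.card E - k) ^ q := by
          rw [sum_ite, sum_const_zero, zero_add, sum_const, smul_eq_mul, filter_not, filter_mem_eq_inter,
            univ_inter, ← compl_eq_univ_sdiff]
      _ ≤ (Fintype.card E - k) * (Fintype.card E - k) ^ q := by
          gcongr
          rw [card_compl]
          omega
      _ = (Fintype.card E - k) ^ (q + 1) := (pow_succ' _ _).symm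

namespace SimpleGraph
variable {W : Type*} (G : SimpleGraph W)

theorem greedyAux_append (l₁ l₂ : List (Sym2 W)) (M : Finset (Sym2 W)) :
    greedyAux G (l₁ ++ l₂) M = greedyAux G l₂ (greedyAux G l₁ M) := by
  induction l₁ generalizing M with
  | nil => rfl
  | cons e l₁ ih => exact ih _

theorem subset_greedyAux (l : List (Sym2 W)) (M : Finset (Sym2 W)) : M ⊆ greedyAux G l M := by
  induction l generalizing M with
  | nil => exact Subset.rfl
  | cons e l ih =>
    refine Subset.trans ?_ (ih _)
    split_ifs
    exacts [subset_insert _ _, Subset.rfl]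

theorem mem_greedyAux_cons {e : Sym2 W} (he : e ∈ G.edgeSet) {M : Finset (Sym2 W)}
    (hfree : ∀ v ∈ e, ∀ f ∈ M, v ∉ f) (l : List (Sym2 W)) : e ∈ greedyAux G (e :: l) M :=
  subset_greedyAux G l _ (by rw [if_pos ⟨he, hfree⟩]; exact mem_insert_self e M)

variable {G} in
theorem unmatched_of_unmatched_greedyAux {l : List (Sym2 W)} {M : Finset (Sym2 W)} {v : W}
    (hv : ∀ f ∈ greedyAux G l M, v ∉ f) : ∀ f ∈ M, v ∉ f :=
  fun f hf => hv f (subset_greedyAux G l M hf)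

variable [Fintype W] [DecidableEq W]

theorem card_unmatched_neighbors_le (M : Finset (Sym2 W)) {v : W} (hv : ∀ f ∈ M, v ∉ f) :
    #{u | G.Adj v u ∧ ∀ f ∈ M, u ∉ f} ≤
      #{e : {e : Sym2 W // ¬ e.IsDiag} | ∀ l, ∃ f ∈ greedyAux G (e.1 :: l) M, v ∈ f} := by
  calc #{u | G.Adj v u ∧ ∀ f ∈ M, u ∉ f}
      ≤ #(({e : {e : Sym2 W // ¬ e.IsDiag} | ∀ l, ∃ f ∈ greedyAux G (e.1 :: l) M, v ∈ f} :
          Finset _).map (Function.Embedding.subtype _)) := by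
        refine card_le_card_of_injOn (fun u => s(v, u)) ?_ fun u₁ _ u₂ _ h => Sym2.congr_right.mp h
        intro u hu
        obtain ⟨hadj, hu⟩ := (mem_filter.mp hu).2
        refine mem_map.mpr ⟨⟨s(v, u), by simpa using hadj.ne⟩, mem_filter.mpr ⟨mem_univ _, ?_⟩, rfl⟩
        refine fun l => ⟨s(v, u), mem_greedyAux_cons G hadj ?_ l, Sym2.mem_mk_left v u⟩
        simp only [Sym2.mem_iff, forall_eq_or_imp, forall_eq]
        exact ⟨hv, hu⟩
    _ = _ := card_map _

def IsCrowded (M : Finset (Sym2 W)) (K : ℕ) (v : W) : Prop :=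
  (∀ f ∈ M, v ∉ f) ∧ K < #{u | G.Adj v u ∧ ∀ f ∈ M, u ∉ f}

theorem card_isCrowded_greedyMatching_le (K q : ℕ) (v : W) :
    #{ω : Fin q → {e : Sym2 W // ¬ e.IsDiag} |
        G.IsCrowded (greedyMatching G (List.ofFn fun i => (ω i).1)) K v} ≤
      (Fintype.card {e : Sym2 W // ¬ e.IsDiag} - (K + 1)) ^ q := by
  have hofFn : ∀ ω : Fin q → {e : Sym2 W // ¬ e.IsDiag},
      List.ofFn (fun i => (ω i).1) = (List.ofFn ω).map Subtype.val :=
    fun ω => (List.map_ofFn ..).symm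
  simp only [hofFn]
  refine card_filter_ofFn_le_pow (K + 1) q
    (fun l => G.IsCrowded (greedyMatching G (l.map Subtype.val)) K v) ?_
  rintro w e l ⟨hv, hK⟩
  set M₀ := greedyAux G (w.map Subtype.val) ∅
  have hsplit : ∀ l', greedyMatching G ((w ++ l').map Subtype.val) =
      greedyAux G (l'.map Subtype.val) M₀ := fun l' => by
    rw [greedyMatching, List.map_append, greedyAux_append]
  rw [hsplit] at hv hK
  calc K + 1 ≤ #{u | G.Adj v u ∧ ∀ f ∈ greedyAux G ((e :: l).map Subtype.val) M₀, u ∉ f} := hK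
    _ ≤ #{u | G.Adj v u ∧ ∀ f ∈ M₀, u ∉ f} :=
        card_le_card <| monotone_filter_right _ fun _ _ ⟨hadj, hu⟩ =>
          ⟨hadj, unmatched_of_unmatched_greedyAux hu⟩
    _ ≤ #{e : {e : Sym2 W // ¬ e.IsDiag} | ∀ l, ∃ f ∈ greedyAux G (e.1 :: l) M₀, v ∈ f} :=
        card_unmatched_neighbors_le G M₀ (unmatched_of_unmatched_greedyAux hv)
    _ ≤ _ := by
        refine card_le_card <| monotone_filter_right _ fun e' _ he' l' hcrowded => ?_
        obtain ⟨f, hf, hvf⟩ := he' (l'.map Subtype.val)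
        rw [hsplit] at hcrowded
        exact hcrowded.1 f hf hvf

theorem card_exists_isCrowded_greedyMatching_le (K q : ℕ) :
    #{ω : Fin q → {e : Sym2 W // ¬ e.IsDiag} |
        ∃ v, G.IsCrowded (greedyMatching G (List.ofFn fun i => (ω i).1)) K v} ≤
      Fintype.card W * (Fintype.card {e : Sym2 W // ¬ e.IsDiag} - (K + 1)) ^ q := by
  calc _ ≤ #(univ.biUnion fun v =>
          {ω : Fin q → {e : Sym2 W // ¬ e.IsDiag} |
            G.IsCrowded (greedyMatching G (List.ofFn fun i => (ω i).1)) K v}) := by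
        refine card_le_card fun ω hω => ?_
        obtain ⟨v, hv⟩ := (mem_filter.mp hω).2
        exact mem_biUnion.mpr ⟨v, mem_univ _, mem_filter.mpr ⟨mem_univ _, hv⟩⟩
    _ ≤ #(univ : Finset W) * _ :=
        card_biUnion_le_card_mul _ _ _ fun v _ => card_isCrowded_greedyMatching_le G K q v
    _ = _ := by rw [card_univ]

end SimpleGraph

theorem cast_tsub_le_mul_exp {N : ℕ} (hN : 0 < N) (k : ℕ) :
    ((N - k : ℕ) : ℝ) ≤ N * exp (-(k / N)) := by
  have hN' : (0 : ℝ) < N := Nat.cast_pos.mpr hN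
  rcases le_total k N with hkN | hNk
  · calc ((N - k : ℕ) : ℝ) = N * (-(k / N) + 1) := by
          rw [Nat.cast_sub hkN]; field_simp; ring
      _ ≤ N * exp (-(k / N)) := by gcongr; exact add_one_le_exp _
  · rw [Nat.sub_eq_zero_of_le hNk, Nat.cast_zero]
    positivity

theorem cast_tsub_pow_le_mul_exp {N : ℕ} (hN : 0 < N) (k p : ℕ) :
    ((N - k : ℕ) : ℝ) ^ p ≤ N ^ p * exp (-(p * k / N)) := by
  calc ((N - k : ℕ) : ℝ) ^ p ≤ (N * exp (-(k / N))) ^ p := by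
        gcongr; exact cast_tsub_le_mul_exp hN k
    _ = N ^ p * exp (-(p * k / N)) := by
        rw [mul_pow, ← exp_nat_mul]; ring_nf

theorem mul_log_le_mul_floor_rpow_succ_div {n N p : ℕ} {ε : ℝ} (hn : 0 < n) (hN : 0 < N) (hNn : N ≤ n ^ 2)
    (hp : 100 * (n : ℝ) ^ ((2 : ℝ) - 2 * ε) * log n ≤ p) :
    100 * log n ≤ p * (⌊(n : ℝ) ^ (2 * ε)⌋₊ + 1 : ℕ) / N := by
  have hn' : (0 : ℝ) < n := Nat.cast_pos.mpr hn
  have hN' : (0 : ℝ) < N := Nat.cast_pos.mpr hN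
  have hlog : 0 ≤ log n := log_natCast_nonneg n
  have hpow : (n : ℝ) ^ ((2 : ℝ) - 2 * ε) * (n : ℝ) ^ (2 * ε) = n ^ 2 := by
    rw [← rpow_add hn', sub_add_cancel, rpow_two]
  have hK : (n : ℝ) ^ (2 * ε) ≤ (⌊(n : ℝ) ^ (2 * ε)⌋₊ + 1 : ℕ) := by
    push_cast; exact (Nat.lt_floor_add_one _).le
  rw [le_div_iff₀ hN']
  calc 100 * log n * N ≤ 100 * log n * n ^ 2 := by gcongr; exact_mod_cast hNn
    _ = 100 * (n : ℝ) ^ ((2 : ℝ) - 2 * ε) * log n * (n : ℝ) ^ (2 * ε) := by rw [← hpow]; ring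
    _ ≤ p * (⌊(n : ℝ) ^ (2 * ε)⌋₊ + 1 : ℕ) := by gcongr

theorem natCast_mul_tsub_pow_le {m n N K p : ℕ} (hmn : m ≤ n) (hN : 0 < N)
    (hexp : 100 * log n ≤ p * K / N) :
    (m : ℝ) * ((N - K : ℕ) : ℝ) ^ p ≤ ((n : ℝ) ^ 9)⁻¹ * N ^ p := by
  rcases Nat.eq_zero_or_pos n with rfl | hn
  · simp_all
  have hn' : (0 : ℝ) < n := Nat.cast_pos.mpr hn
  have hdecay : exp (-(p * K / N)) ≤ ((n : ℝ) ^ 10)⁻¹ := by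
    rw [← exp_log hn', ← exp_nat_mul, ← exp_neg]
    gcongr
    push_cast
    linarith [log_natCast_nonneg n]
  calc (m : ℝ) * ((N - K : ℕ) : ℝ) ^ p ≤ n * (N ^ p * exp (-(p * K / N))) := by
        gcongr
        exact cast_tsub_pow_le_mul_exp hN K p
    _ ≤ n * (N ^ p * ((n : ℝ) ^ 10)⁻¹) := by gcongr
    _ = ((n : ℝ) ^ 9)⁻¹ * N ^ p := by field_simp

theorem one_sub_le_card_filter_div {Ω : Type*} [Fintype Ω] (P : Ω → Prop) [DecidablePred P]
    {δ : ℝ} (hΩ : 0 < Fintype.card Ω) (h : (#{ω | ¬ P ω} : ℝ) ≤ δ * Fintype.card Ω) :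
    1 - δ ≤ #{ω | P ω} / Fintype.card Ω := by
  have hsplit : (#{ω | P ω} : ℝ) + #{ω | ¬ P ω} = Fintype.card Ω := by
    exact_mod_cast card_filter_add_card_filter_not P
  rw [le_div_iff₀ (Nat.cast_pos.mpr hΩ)]
  linarith

theorem stmt_4_general {V' : Type*} [Fintype V'] [DecidableEq V'] (G : SimpleGraph V')
    (n : ℕ) (ε : ℝ)
    (hV2 : 2 ≤ Fintype.card V') (hVn : Fintype.card V' ≤ n)
    (p : ℕ) (hp : p = ⌈(100 : ℝ) * (n : ℝ) ^ ((2 : ℝ) - 2 * ε) * Real.log n⌉₊) :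
    (1 : ℝ) - ((n : ℝ) ^ 9)⁻¹ ≤
      ((Finset.univ.filter (fun ω : Fin p → {e : Sym2 V' // ¬ e.IsDiag} =>
          ∀ v : V', (∀ f ∈ greedyMatching G (List.ofFn fun i => (ω i).1), v ∉ f) →
            ((Finset.univ.filter fun u : V' =>
                G.Adj v u ∧ ∀ f ∈ greedyMatching G (List.ofFn fun i => (ω i).1), u ∉ f).card : ℝ)
              ≤ (n : ℝ) ^ (2 * ε))).card : ℝ) /
        (Fintype.card (Fin p → {e : Sym2 V' // ¬ e.IsDiag}) : ℝ) := by
  set N := Fintype.card {e : Sym2 V' // ¬ e.IsDiag}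
  set K := ⌊(n : ℝ) ^ (2 * ε)⌋₊
  have hNchoose : N = (Fintype.card V').choose 2 := Sym2.card_subtype_not_diag
  have hN : 0 < N := hNchoose ▸ Nat.choose_pos hV2
  have hNn : N ≤ n ^ 2 := calc
    N ≤ Fintype.card V' ^ 2 := hNchoose ▸ Nat.choose_le_pow _ _
    _ ≤ n ^ 2 := by gcongr
  have hexp := mul_log_le_mul_floor_rpow_succ_div (by omega) hN hNn (hp ▸ Nat.le_ceil _)
  refine one_sub_le_card_filter_div _ (by rw [Fintype.card_fun, Fintype.card_fin]; positivity) ?_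
  rw [Fintype.card_fun, Fintype.card_fin, Nat.cast_pow]
  calc _ ≤ ((Fintype.card V' * (N - (K + 1)) ^ p : ℕ) : ℝ) := by
        refine Nat.cast_le.mpr <| (card_le_card <| monotone_filter_right _ fun ω _ h => ?_).trans
          (G.card_exists_isCrowded_greedyMatching_le K p)
        simp only [not_forall, not_le, exists_prop] at h
        obtain ⟨v, hv, hlt⟩ := h
        exact ⟨v, hv, (Nat.floor_lt (by positivity)).mpr hlt⟩
    _ ≤ _ := by
        push_cast
        exact natCast_mul_tsub_pow_le hVn hN hexp

/-- Sampling a sequence of `p = ⌈100·n^{2−2ε}·log n⌉` unordered pairs of distinct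
vertices of `V'` independently and uniformly at random (the sample space is
`Fin p → {e : Sym2 V' // ¬e.IsDiag}` with the uniform distribution), and letting `M`
be the greedy matching obtained by scanning the sequence in order: with probability
at least `1 − n⁻⁹`, every vertex unmatched by `M` has at most `n^{2ε}` neighbors in
the induced subgraph on the unmatched vertices. -/
theorem stmt_4 {V' : Type*} [Fintype V'] [DecidableEq V'] (G : SimpleGraph V')
    (n : ℕ) (hn : 2 ≤ n) (ε : ℝ) (hε0 : 0 < ε) (hε1 : ε ≤ 1/2)
    (hV2 : 2 ≤ Fintype.card V') (hVn : Fintype.card V' ≤ n)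
    (p : ℕ) (hp : p = ⌈(100 : ℝ) * (n : ℝ) ^ ((2 : ℝ) - 2 * ε) * Real.log n⌉₊) :
    (1 : ℝ) - ((n : ℝ) ^ 9)⁻¹ ≤
      ((Finset.univ.filter (fun ω : Fin p → {e : Sym2 V' // ¬ e.IsDiag} =>
          ∀ v : V', (∀ f ∈ greedyMatching G (List.ofFn fun i => (ω i).1), v ∉ f) →
            ((Finset.univ.filter fun u : V' =>
                G.Adj v u ∧ ∀ f ∈ greedyMatching G (List.ofFn fun i => (ω i).1), u ∉ f).card : ℝ)
              ≤ (n : ℝ) ^ (2 * ε))).card : ℝ) /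
        (Fintype.card (Fin p → {e : Sym2 V' // ¬ e.IsDiag}) : ℝ) :=
  stmt_4_general G n ε hV2 hVn p hp
end

section
/- Let G = (V,E) be a finite simple graph, M^in a matching in G, k ≥ 0 an integer, and ℓ : V → {0,…,2k+1} a layering, with layered edge sets E_0, E_2, …, E_{2k} and relevant vertex sets V_0, …, V_{2k+1} as defined. Let M_0, M_2, …, M_{2k} be a nested sequence of matchings with M_{2i} ⊆ E_{2i} for each i ∈ [0,k]. Then there exists a collection of |M_{2k}| pairwise vertex-disjoint augmenting paths of length 2k+1 with respect to M^in in G. -/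
attribute [local instance] Classical.propDecidable

/-- An augmenting path of length `2k+1` w.r.t. the matching `M`: a sequence of distinct
vertices `p 0, …, p (2k+1)` whose endpoints are unmatched, with
`(p (2i), p (2i+1)) ∈ E \ M` for `i ∈ [0,k]` and `(p (2i−1), p (2i)) ∈ M` for `i ∈ [1,k]`. -/
def IsAugPath {V : Type*} (G : SimpleGraph V) (M : Finset (Sym2 V)) (k : ℕ) (p : ℕ → V) :
    Prop :=
  (∀ i j, i ≤ 2*k+1 → j ≤ 2*k+1 → p i = p j → i = j) ∧
  (∀ e ∈ M, p 0 ∉ e) ∧ (∀ e ∈ M, p (2*k+1) ∉ e) ∧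
  (∀ i ≤ k, G.Adj (p (2*i)) (p (2*i+1)) ∧ s(p (2*i), p (2*i+1)) ∉ M) ∧
  (∀ i, 1 ≤ i → i ≤ k → s(p (2*i-1), p (2*i)) ∈ M)

/-- The vertex set `V_H` of the layered subgraph determined by `G`, `Min`, `k` and the
layering `ℓ`. -/
def layerVH {V : Type*} (Min : Finset (Sym2 V)) (k : ℕ) (ℓ : V → ℕ) : Set V :=
  {v | ((ℓ v = 0 ∨ ℓ v = 2*k+1) ∧ ∀ e ∈ Min, v ∉ e)
    ∨ (∃ j, 1 ≤ j ∧ j ≤ k ∧ ℓ v = 2*j - 1 ∧ ∃ u, s(v, u) ∈ Min ∧ ℓ u = 2*j)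
    ∨ (∃ j, 1 ≤ j ∧ j ≤ k ∧ ℓ v = 2*j ∧ ∃ u, s(v, u) ∈ Min ∧ ℓ u = 2*j - 1)}

/-- The edge set `E_H` of the layered subgraph: edges of `G` between vertices of `V_H`
in consecutive layers, unmatched if the lower layer is even and matched if it is odd. -/
def layerEH {V : Type*} (G : SimpleGraph V) (Min : Finset (Sym2 V)) (k : ℕ) (ℓ : V → ℕ) :
    Set (Sym2 V) :=
  {e | e ∈ G.edgeSet ∧ ∃ u v : V, e = s(u, v) ∧
      u ∈ layerVH Min k ℓ ∧ v ∈ layerVH Min k ℓ ∧ ℓ v = ℓ u + 1 ∧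
      ((Even (ℓ u) ∧ e ∉ Min) ∨ (Odd (ℓ u) ∧ e ∈ Min))}

/-- The layer-`i` edge set `E_i`: edges of `E_H` between layers `i` and `i+1`. -/
def layerE {V : Type*} (G : SimpleGraph V) (Min : Finset (Sym2 V)) (k : ℕ) (ℓ : V → ℕ)
    (i : ℕ) : Set (Sym2 V) :=
  {e | e ∈ layerEH G Min k ℓ ∧ ∃ u v : V, e = s(u, v) ∧ ℓ u = i ∧ ℓ v = i + 1}

section AuxLemmas

variable {V : Type*} {G : SimpleGraph V} {Min : Finset (Sym2 V)} {k : ℕ} {ℓ : V → ℕ}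

lemma aux_struct {i : ℕ} {e : Sym2 V} (he : e ∈ layerE G Min k ℓ (2*i)) :
    ∃ u v : V, e = s(u, v) ∧ ℓ u = 2*i ∧ ℓ v = 2*i+1 ∧
      u ∈ layerVH Min k ℓ ∧ v ∈ layerVH Min k ℓ ∧ e ∈ G.edgeSet ∧ e ∉ Min := by
  obtain ⟨⟨heG, u', v', he', hu', hv', hlv', hpar⟩, u, v, heuv, hu, hv⟩ := he
  rcases Sym2.eq_iff.mp (he'.symm.trans heuv) with ⟨h1, h2⟩ | ⟨h1, h2⟩
  · subst h1; subst h2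
    refine ⟨u', v', heuv, hu, hv, hu', hv', heG, ?_⟩
    rcases hpar with ⟨_, hn⟩ | ⟨hodd, _⟩
    · exact hn
    · have := Nat.odd_iff.mp hodd
      omega
  · subst h1; subst h2
    omega

lemma aux_mate {u : V} (hu : u ∈ layerVH Min k ℓ) {i : ℕ} (hi1 : 1 ≤ i) (hik : i ≤ k)
    (hlu : ℓ u = 2*i) : ∃ w, s(u, w) ∈ Min ∧ ℓ w = 2*i - 1 := by
  rcases hu with ⟨h0, _⟩ | ⟨j, hj1, hjk, hlv, w, hw, hlw⟩ | ⟨j, hj1, hjk, hlv, w, hw, hlw⟩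
  · rcases h0 with h | h <;> omega
  · omega
  · exact ⟨w, hw, by omega⟩

lemma aux_unmatched {u : V} (hu : u ∈ layerVH Min k ℓ) (h : ℓ u = 0 ∨ ℓ u = 2*k+1) :
    ∀ e ∈ Min, u ∉ e := by
  rcases hu with ⟨_, h2⟩ | ⟨j, hj1, hjk, hlv, _⟩ | ⟨j, hj1, hjk, hlv, _⟩
  · exact h2
  · rcases h with h | h <;> omega
  · rcases h with h | h <;> omega

lemma mate_unique (hMin : IsMatching G Min) {u w w' : V}
    (h : s(u, w) ∈ Min) (h' : s(u, w') ∈ Min) : w = w' := by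
  by_contra hne
  have hedne : (s(u, w) : Sym2 V) ≠ s(u, w') := by
    intro heq
    rcases Sym2.eq_iff.mp heq with ⟨_, h2⟩ | ⟨h1, h2⟩
    · exact hne h2
    · exact hne (h2.trans h1)
  exact hMin.2 _ h _ h' hedne u (by simp) (by simp)

lemma aux_exists (hMin : IsMatching G Min) (Ms : ℕ → Finset (Sym2 V))
    (hsub : ∀ i ≤ k, ∀ e ∈ Ms i, e ∈ layerE G Min k ℓ (2*i))
    (hnested : ∀ i, 1 ≤ i → i ≤ k → ∀ v : V, (∃ e ∈ Ms i, v ∈ e) →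
      v ∈ layerVH Min k ℓ → ℓ v = 2*i →
      ∀ u : V, s(v, u) ∈ Min → ∃ e ∈ Ms (i-1), u ∈ e) :
    ∀ i, i ≤ k → ∀ e ∈ Ms i, ∃ p : ℕ → V,
      (∀ m ≤ 2*i+1, ℓ (p m) = m) ∧ e = s(p (2*i), p (2*i+1)) ∧
      (∀ m ≤ i, s(p (2*m), p (2*m+1)) ∈ Ms m) ∧
      (∀ m, 1 ≤ m → m ≤ i → s(p (2*m-1), p (2*m)) ∈ Min) := by
  intro i
  induction i with
  | zero =>
    intro _ e he
    obtain ⟨u, v, heuv, hu0, hv1, _, _, _, _⟩ := aux_struct (hsub 0 (Nat.zero_le _) e he)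
    refine ⟨fun m => if m = 0 then u else v, ?_, ?_, ?_, ?_⟩
    · intro m hm
      interval_cases m <;> simp <;> omega
    · simpa using heuv
    · intro m hm
      interval_cases m
      have h : (s(u, v) : Sym2 V) ∈ Ms 0 := heuv ▸ he
      simpa using h
    · intro m h1 h2; omega
  | succ i ih =>
    intro hik e he
    obtain ⟨u, v, heuv, hu2, hv2, huVH, hvVH, _, _⟩ := aux_struct (hsub (i+1) hik e he)
    obtain ⟨w, hw, hlw⟩ := aux_mate huVH (by omega) hik hu2
    obtain ⟨e', he', hwe'⟩ :=
      hnested (i+1) (by omega) hik u ⟨e, he, by rw [heuv]; simp⟩ huVH hu2 w hw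
    rw [Nat.add_sub_cancel] at he'
    obtain ⟨p', hp1, hp2, hp3, hp4⟩ := ih (by omega) e' he'
    have hw' : w = p' (2*i+1) := by
      rw [hp2] at hwe'
      rcases Sym2.mem_iff.mp hwe' with h | h
      · have h1 := hp1 (2*i) (by omega)
        rw [← h] at h1
        omega
      · exact h
    refine ⟨fun m => if m ≤ 2*i+1 then p' m else if m = 2*i+2 then u else v, ?_, ?_, ?_, ?_⟩
    · intro m hm
      by_cases h : m ≤ 2*i+1
      · simp only [if_pos h]
        exact hp1 m h
      · have h' : m = 2*i+2 ∨ m = 2*i+3 := by omega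
        rcases h' with rfl | rfl
        · beta_reduce
          rw [if_neg h, if_pos rfl]
          omega
        · beta_reduce
          rw [if_neg h, if_neg (show ¬(2*i+3 = 2*i+2) by omega)]
          omega
    · beta_reduce
      rw [if_neg (show ¬(2*(i+1) ≤ 2*i+1) by omega),
        if_pos (show 2*(i+1) = 2*i+2 by omega),
        if_neg (show ¬(2*(i+1)+1 ≤ 2*i+1) by omega),
        if_neg (show ¬(2*(i+1)+1 = 2*i+2) by omega)]
      exact heuv
    · intro m hm
      rcases Nat.lt_or_ge m (i+1) with h | h
      · beta_reduce
        rw [if_pos (show 2*m ≤ 2*i+1 by omega), if_pos (show 2*m+1 ≤ 2*i+1 by omega)]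
        exact hp3 m (by omega)
      · have hmeq : m = i+1 := by omega
        subst hmeq
        beta_reduce
        rw [if_neg (show ¬(2*(i+1) ≤ 2*i+1) by omega),
          if_pos (show 2*(i+1) = 2*i+2 by omega),
          if_neg (show ¬(2*(i+1)+1 ≤ 2*i+1) by omega),
          if_neg (show ¬(2*(i+1)+1 = 2*i+2) by omega)]
        exact heuv ▸ he
    · intro m h1m h2m
      rcases Nat.lt_or_ge m (i+1) with h | h
      · beta_reduce
        rw [if_pos (show 2*m-1 ≤ 2*i+1 by omega), if_pos (show 2*m ≤ 2*i+1 by omega)]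
        exact hp4 m h1m (by omega)
      · have hmeq : m = i+1 := by omega
        subst hmeq
        have e1 : 2*(i+1)-1 = 2*i+1 := by omega
        beta_reduce
        rw [e1, if_pos (le_refl (2*i+1)),
          if_neg (show ¬(2*(i+1) ≤ 2*i+1) by omega),
          if_pos (show 2*(i+1) = 2*i+2 by omega), ← hw', Sym2.eq_swap]
        exact hw

lemma aux_disj (hMin : IsMatching G Min)
    (Ms : ℕ → Finset (Sym2 V)) (hmatch : ∀ i ≤ k, IsMatching G (Ms i))
    {e e' : Sym2 V} (he : e ∈ Ms k) (he' : e' ∈ Ms k) (hne : e ≠ e')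
    {p q : ℕ → V}
    (hp1 : ∀ m ≤ 2*k+1, ℓ (p m) = m) (hp2 : e = s(p (2*k), p (2*k+1)))
    (hp3 : ∀ m ≤ k, s(p (2*m), p (2*m+1)) ∈ Ms m)
    (hp4 : ∀ m, 1 ≤ m → m ≤ k → s(p (2*m-1), p (2*m)) ∈ Min)
    (hq1 : ∀ m ≤ 2*k+1, ℓ (q m) = m) (hq2 : e' = s(q (2*k), q (2*k+1)))
    (hq3 : ∀ m ≤ k, s(q (2*m), q (2*m+1)) ∈ Ms m)
    (hq4 : ∀ m, 1 ≤ m → m ≤ k → s(q (2*m-1), q (2*m)) ∈ Min) :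
    ∀ m ≤ 2*k+1, ∀ n ≤ 2*k+1, p m ≠ q n := by
  have key : ∀ d, d ≤ k →
      s(p (2*(k-d)), p (2*(k-d)+1)) ≠ s(q (2*(k-d)), q (2*(k-d)+1)) := by
    intro d
    induction d with
    | zero =>
      intro _
      rw [Nat.sub_zero, ← hp2, ← hq2]
      exact hne
    | succ d ihd =>
      intro hdk
      set m := k - (d+1) with hm
      have hkd : k - d = m + 1 := by omega
      have hEne := ihd (by omega)
      rw [hkd] at hEne
      have hmem : s(p (2*(m+1)), p (2*(m+1)+1)) ∈ Ms (m+1) := hp3 (m+1) (by omega)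
      have hmem' : s(q (2*(m+1)), q (2*(m+1)+1)) ∈ Ms (m+1) := hq3 (m+1) (by omega)
      have hnotin : p (2*(m+1)) ∉ (s(q (2*(m+1)), q (2*(m+1)+1)) : Sym2 V) :=
        (hmatch (m+1) (by omega)).2 _ hmem _ hmem' hEne _ (by simp)
      have hne2 : p (2*(m+1)) ≠ q (2*(m+1)) := by
        intro hcontra
        exact hnotin (by rw [hcontra]; simp)
      have hsub1 : 2*(m+1)-1 = 2*m+1 := by omega
      have hMe : s(p (2*m+1), p (2*(m+1))) ∈ Min := by
        have h := hp4 (m+1) (by omega) (by omega)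
        rwa [hsub1] at h
      have hMe' : s(q (2*m+1), q (2*(m+1))) ∈ Min := by
        have h := hq4 (m+1) (by omega) (by omega)
        rwa [hsub1] at h
      intro heq
      rcases Sym2.eq_iff.mp heq with ⟨h1, h2⟩ | ⟨h1, h2⟩
      · rw [h2] at hMe
        exact hne2 (mate_unique hMin hMe hMe')
      · have l1 := hp1 (2*m) (by omega)
        have l2 := hq1 (2*m+1) (by omega)
        rw [h1] at l1
        omega
  intro m hm n hn heq
  by_cases hmn : m = n
  · subst hmn
    obtain ⟨t, hcase, htk⟩ : ∃ t, (m = 2*t ∨ m = 2*t+1) ∧ t ≤ k := ⟨m/2, by omega, by omega⟩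
    have hEdge := key (k - t) (by omega)
    have hkt : k - (k - t) = t := by omega
    rw [hkt] at hEdge
    have h1 : s(p (2*t), p (2*t+1)) ∈ Ms t := hp3 t htk
    have h2 : s(q (2*t), q (2*t+1)) ∈ Ms t := hq3 t htk
    rcases hcase with rfl | rfl
    · exact (hmatch t htk).2 _ h1 _ h2 hEdge (p (2*t)) (by simp) (by rw [heq]; simp)
    · exact (hmatch t htk).2 _ h1 _ h2 hEdge (p (2*t+1)) (by simp) (by rw [heq]; simp)
  · have l1 := hp1 m hm
    have l2 := hq1 n hn
    rw [heq] at l1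
    omega

end AuxLemmas

/-- Given a nested sequence of matchings `Ms 0 ⊆ E_0, Ms 1 ⊆ E_2, …, Ms k ⊆ E_{2k}`
(where `Ms i` plays the role of `M_{2i}`), there exists a collection of `|Ms k|`
pairwise vertex-disjoint augmenting paths of length `2k+1` w.r.t. `Min` in `G`. -/
theorem stmt_6 {V : Type*} [Fintype V] (G : SimpleGraph V) (Min : Finset (Sym2 V))
    (hMin : IsMatching G Min) (k : ℕ) (ℓ : V → ℕ) (hℓ : ∀ v, ℓ v ≤ 2*k+1)
    (Ms : ℕ → Finset (Sym2 V))
    (hmatch : ∀ i ≤ k, IsMatching G (Ms i))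
    (hsub : ∀ i ≤ k, ∀ e ∈ Ms i, e ∈ layerE G Min k ℓ (2*i))
    (hnested : ∀ i, 1 ≤ i → i ≤ k → ∀ v : V, (∃ e ∈ Ms i, v ∈ e) →
      v ∈ layerVH Min k ℓ → ℓ v = 2*i →
      ∀ u : V, s(v, u) ∈ Min → ∃ e ∈ Ms (i-1), u ∈ e) :
    ∃ P : Fin (Ms k).card → (ℕ → V),
      (∀ a, IsAugPath G Min k (P a)) ∧
      (∀ a b, a ≠ b → ∀ i ≤ 2*k+1, ∀ j ≤ 2*k+1, P a i ≠ P b j) := by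
  have hex := aux_exists hMin Ms hsub hnested
  have hexk : ∀ e : {x // x ∈ Ms k}, ∃ p : ℕ → V,
      (∀ m ≤ 2*k+1, ℓ (p m) = m) ∧ (e : Sym2 V) = s(p (2*k), p (2*k+1)) ∧
      (∀ m ≤ k, s(p (2*m), p (2*m+1)) ∈ Ms m) ∧
      (∀ m, 1 ≤ m → m ≤ k → s(p (2*m-1), p (2*m)) ∈ Min) :=
    fun e => hex k le_rfl e.1 e.2
  choose p hp1 hp2 hp3 hp4 using hexk
  let eqv := (Ms k).equivFin
  refine ⟨fun a => p (eqv.symm a), ?_, ?_⟩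
  · intro a
    beta_reduce
    set e := eqv.symm a with hedef
    refine ⟨?_, ?_, ?_, ?_, ?_⟩
    · intro i j hi hj hij
      have h1 := hp1 e i hi
      have h2 := hp1 e j hj
      rw [hij] at h1
      omega
    · intro f hf
      obtain ⟨u, v, heuv, hu0, hv1, huVH, hvVH, _, _⟩ :=
        aux_struct (hsub 0 (Nat.zero_le _) _ (hp3 e 0 (Nat.zero_le _)))
      have h0 : p e 0 = u := by
        rcases Sym2.eq_iff.mp heuv with ⟨h1, _⟩ | ⟨h1, h2⟩
        · exact h1
        · have hl := hp1 e 0 (by omega)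
          rw [h1] at hl
          omega
      rw [h0]
      exact aux_unmatched huVH (Or.inl (by omega)) f hf
    · intro f hf
      obtain ⟨u, v, heuv, hu0, hv1, huVH, hvVH, _, _⟩ :=
        aux_struct (hsub k le_rfl _ (hp3 e k le_rfl))
      have h0 : p e (2*k+1) = v := by
        rcases Sym2.eq_iff.mp heuv with ⟨_, h2⟩ | ⟨h1, h2⟩
        · exact h2
        · have hl := hp1 e (2*k+1) (by omega)
          rw [h2] at hl
          omega
      rw [h0]
      exact aux_unmatched hvVH (Or.inr (by omega)) f hf
    · intro i hik
      obtain ⟨u, v, heuv, _, _, _, _, hG, hnM⟩ :=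
        aux_struct (hsub i hik _ (hp3 e i hik))
      exact ⟨(SimpleGraph.mem_edgeSet G).mp hG, hnM⟩
    · intro i h1 h2
      exact hp4 e i h1 h2
  · intro a b hab i hi j hj
    beta_reduce
    have hne : ((eqv.symm a : {x // x ∈ Ms k}) : Sym2 V) ≠ (eqv.symm b : {x // x ∈ Ms k}) := by
      intro h
      exact hab (eqv.symm.injective (Subtype.ext h))
    exact aux_disj hMin Ms hmatch (eqv.symm a).2 (eqv.symm b).2 hne
      (hp1 _) (hp2 _) (hp3 _) (hp4 _) (hq1 := hp1 _) (hq2 := hp2 _) (hq3 := hp3 _)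
      (hq4 := hp4 _) i hi j hj
end
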